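/- As z → ∞ with z ∈ ℂ ∖ (−∞, 0], D(z) = 1 − α z^{−1/2} + (α²/2) z^{−1} + O(|z|^{−3/2}); that is, there exist R, C > 0 such that |D(z) − 1 + α z^{−1/2} − (α²/2) z^{−1}| ≤ C|z|^{−3/2} for all z ∈ ℂ ∖ (−∞, 0] with |z| ≥ R, where z^{−1/2} is the principal branch. -/

import Mathlib

/-!
Put `w = (z + 1)^{-1/2}`. Then `D(z) = ((1 + w) / (1 - w))^{-α/2} = exp (-(α/2) L)` with
`L = log (1 + w) + log (1 - w)⁻¹ = 2w + O(|w|³)` by the Taylor bounds for `log (1 ± w)`, so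
`D(z) = 1 - α w + (α²/2) w² + O(|w|³)`. It remains to replace `w` by `z^{-1/2}`: the principal
roots `√z` and `√(z + 1)` lie in the right half-plane with imaginary parts of the same sign, so
`|√z + √(z + 1)| ≥ |√z|`, and `(√(z + 1) - √z)(√(z + 1) + √z) = 1` gives
`z^{-1/2} - w = O(|z|^{-3/2})`; likewise `w² - z⁻¹ = -1 / (z (z + 1)) = O(|z|^{-2})`.
-/

open Complex Set

/-- The Szegő-type function `D(z) = (((z+1)^{1/2} + 1)/((z+1)^{1/2} − 1))^{−α/2}`,
with all powers taken as principal branches. -/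
noncomputable def DFun (α : ℝ) (z : ℂ) : ℂ :=
  ((((z + 1) ^ ((1 : ℂ) / 2) + 1) / ((z + 1) ^ ((1 : ℂ) / 2) - 1)) ^ (-(α : ℂ) / 2))

open ComplexConjugate

namespace Complex

lemma re_one_add_pos {x : ℂ} (hx : ‖x‖ < 1) : 0 < (1 + x).re := by
  have := neg_abs_le x.re
  have := abs_re_le_norm x
  simp only [add_re, one_re]
  linarith

lemma re_one_sub_pos {x : ℂ} (hx : ‖x‖ < 1) : 0 < (1 - x).re := by
  rw [sub_eq_add_neg]
  exact re_one_add_pos (by rwa [norm_neg])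

lemma log_one_add_div_one_sub {w : ℂ} (hw : ‖w‖ < 1) :
    log ((1 + w) / (1 - w)) = log (1 + w) + log (1 - w)⁻¹ := by
  have hadd : 0 < (1 + w).re := re_one_add_pos hw
  have hsub : 0 < (1 - w).re := re_one_sub_pos hw
  have hinv : 0 < ((1 - w)⁻¹).re := by
    rw [inv_re]; exact div_pos hsub (normSq_pos.2 (ne_zero_of_re_pos hsub))
  have harg_add := abs_lt.1 (abs_arg_lt_pi_div_two_iff.2 (Or.inl hadd))
  have harg_inv := abs_lt.1 (abs_arg_lt_pi_div_two_iff.2 (Or.inl hinv))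
  rw [div_eq_mul_inv, log_mul_eq_add_log_iff (ne_zero_of_re_pos hadd) (ne_zero_of_re_pos hinv)]
  constructor <;> linarith [Real.pi_pos]

lemma norm_log_one_add_div_one_sub_sub_le {w : ℂ} (hw : ‖w‖ < 1) :
    ‖log ((1 + w) / (1 - w)) - 2 * w‖ ≤ 2 * (‖w‖ ^ 3 * (1 - ‖w‖)⁻¹ / 3) := by
  have hadd := norm_log_sub_logTaylor_le 2 hw
  have hsub := norm_log_one_sub_inv_add_logTaylor_neg_le 2 hw
  have htaylor : logTaylor 3 w - logTaylor 3 (-w) = 2 * w := by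
    simp [logTaylor, Finset.sum_range_succ]; ring
  rw [log_one_add_div_one_sub hw]
  calc ‖log (1 + w) + log (1 - w)⁻¹ - 2 * w‖
      = ‖(log (1 + w) - logTaylor 3 w) + (log (1 - w)⁻¹ + logTaylor 3 (-w))‖ := by
        rw [← htaylor]; ring_nf
    _ ≤ _ := by
        refine (norm_add_le _ _).trans ?_
        push_cast at hadd hsub
        norm_num at hadd hsub ⊢
        linarith

lemma norm_exp_sub_taylor_two_le {u : ℂ} (hu : ‖u‖ ≤ 1) :
    ‖exp u - (1 + u + u ^ 2 / 2)‖ ≤ ‖u‖ ^ 3 := by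
  have h := exp_bound hu (n := 3) (by norm_num)
  have hsum : ∑ m ∈ Finset.range 3, u ^ m / (m.factorial : ℂ) = 1 + u + u ^ 2 / 2 := by
    simp [Finset.sum_range_succ, Nat.factorial]
  rw [hsum] at h
  refine h.trans ?_
  norm_num [Nat.factorial]
  nlinarith [pow_nonneg (norm_nonneg u) 3]

lemma norm_one_add_div_one_sub_cpow_sub_le (c : ℂ) {w : ℂ} (hw : ‖w‖ ≤ 1 / 2)
    (hcw : 3 * ‖c‖ * ‖w‖ ≤ 1) :
    ‖((1 + w) / (1 - w)) ^ c - (1 + 2 * c * w + 2 * c ^ 2 * w ^ 2)‖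
      ≤ (27 * ‖c‖ ^ 3 + 3 * ‖c‖) * ‖w‖ ^ 3 := by
  set L := log ((1 + w) / (1 - w))
  set r := ‖w‖
  have hr : 0 ≤ r := norm_nonneg w
  have hc : 0 ≤ ‖c‖ := norm_nonneg c
  have hL : ‖L - 2 * w‖ ≤ 4 / 3 * r ^ 3 := by
    refine (norm_log_one_add_div_one_sub_sub_le (by linarith)).trans ?_
    have : (1 - r)⁻¹ ≤ 2 := by
      rw [inv_le_comm₀ (by linarith) two_pos]; linarith
    nlinarith [pow_nonneg hr 3]
  have hL' : ‖L - 2 * w‖ ≤ r / 3 := by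
    have : r ^ 2 ≤ 1 / 4 := by nlinarith
    nlinarith [mul_le_mul_of_nonneg_left this hr]
  have hLc : ‖L * c - 2 * c * w‖ ≤ 4 / 3 * ‖c‖ * r ^ 3 := by
    rw [show L * c - 2 * c * w = c * (L - 2 * w) by ring, norm_mul]
    nlinarith
  have hLc' : ‖L * c + 2 * c * w‖ ≤ 5 * ‖c‖ * r := by
    rw [show L * c + 2 * c * w = c * ((L - 2 * w) + 4 * w) by ring, norm_mul]
    have := (norm_add_le (L - 2 * w) (4 * w))
    rw [norm_mul, RCLike.norm_ofNat] at this
    nlinarith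
  have hu : ‖L * c‖ ≤ 3 * ‖c‖ * r := by
    rw [show L * c = c * ((L - 2 * w) + 2 * w) by ring, norm_mul]
    have := (norm_add_le (L - 2 * w) (2 * w))
    rw [norm_mul, RCLike.norm_ofNat] at this
    nlinarith
  have hexp := norm_exp_sub_taylor_two_le (hu.trans hcw)
  have hne : (1 + w) / (1 - w) ≠ 0 := div_ne_zero
    (ne_zero_of_re_pos (re_one_add_pos (by linarith)))
    (ne_zero_of_re_pos (re_one_sub_pos (by linarith)))
  rw [cpow_def_of_ne_zero hne]
  calc ‖exp (L * c) - (1 + 2 * c * w + 2 * c ^ 2 * w ^ 2)‖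
      = ‖(exp (L * c) - (1 + L * c + (L * c) ^ 2 / 2)) + (L * c - 2 * c * w)
          + (L * c - 2 * c * w) * (L * c + 2 * c * w) / 2‖ := by ring_nf
    _ ≤ ‖L * c‖ ^ 3 + 4 / 3 * ‖c‖ * r ^ 3 + 4 / 3 * ‖c‖ * r ^ 3 * (5 * ‖c‖ * r) / 2 := by
        refine (norm_add_le _ _).trans (add_le_add ((norm_add_le _ _).trans
          (add_le_add hexp hLc)) ?_)
        rw [norm_div, norm_mul, RCLike.norm_ofNat]
        gcongr
    _ ≤ (27 * ‖c‖ ^ 3 + 3 * ‖c‖) * r ^ 3 := by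
        have hu3 : ‖L * c‖ ^ 3 ≤ (3 * ‖c‖ * r) ^ 3 := by gcongr
        nlinarith [mul_nonneg hc (pow_nonneg hr 3)]

lemma re_cpow_inv_two_pos {x : ℂ} (hx : x ∈ slitPlane) : 0 < (x ^ (2⁻¹ : ℂ)).re := by
  rw [cpow_inv_two_re, Real.sqrt_pos]
  rcases mem_slitPlane_iff.1 hx with hre | him
  · linarith [norm_nonneg x]
  · linarith [neg_abs_le x.re, abs_re_lt_norm.2 him]

lemma im_cpow_inv_two_mul_nonneg {x y : ℂ} (h : x.im = y.im) :
    0 ≤ (x ^ (2⁻¹ : ℂ)).im * (y ^ (2⁻¹ : ℂ)).im := by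
  rcases le_or_gt 0 x.im with hx | hx
  · rw [cpow_inv_two_im_eq_sqrt hx, cpow_inv_two_im_eq_sqrt (h ▸ hx)]
    positivity
  · rw [cpow_inv_two_im_eq_neg_sqrt hx, cpow_inv_two_im_eq_neg_sqrt (h ▸ hx), neg_mul_neg]
    positivity

lemma norm_le_norm_add_of_re_mul_conj_nonneg {a b : ℂ} (h : 0 ≤ (a * conj b).re) :
    ‖a‖ ≤ ‖a + b‖ := by
  rw [mul_re, conj_re, conj_im] at h
  refine le_of_pow_le_pow_left₀ two_ne_zero (norm_nonneg _) ?_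
  rw [Complex.sq_norm, Complex.sq_norm, normSq_apply, normSq_apply, add_re, add_im]
  nlinarith [mul_self_nonneg b.re, mul_self_nonneg b.im]

lemma add_one_mem_slitPlane {z : ℂ} (hz : z ∈ slitPlane) : z + 1 ∈ slitPlane := by
  rcases mem_slitPlane_iff.1 hz with hre | him
  · exact mem_slitPlane_iff.2 (Or.inl (by simp only [add_re, one_re]; linarith))
  · exact mem_slitPlane_iff.2 (Or.inr (by simpa using him))

lemma cpow_neg_one_half_sq (x : ℂ) : (x ^ (-(1 : ℂ) / 2)) ^ 2 = x⁻¹ := by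
  rw [show -(1 : ℂ) / 2 = -2⁻¹ by ring, cpow_neg, inv_pow, cpow_ofNat_inv_pow]

lemma norm_cpow_neg_one_half_sub_add_one_le {z : ℂ} (hz : z ∈ slitPlane) :
    ‖z ^ (-(1 : ℂ) / 2) - (z + 1) ^ (-(1 : ℂ) / 2)‖
      ≤ ‖z ^ (-(1 : ℂ) / 2)‖ ^ 2 * ‖(z + 1) ^ (-(1 : ℂ) / 2)‖ := by
  have hz1 := add_one_mem_slitPlane hz
  rw [show -(1 : ℂ) / 2 = -2⁻¹ by ring, cpow_neg, cpow_neg]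
  set a := z ^ (2⁻¹ : ℂ)
  set b := (z + 1) ^ (2⁻¹ : ℂ)
  have ha : 0 < a.re := re_cpow_inv_two_pos hz
  have hb : 0 < b.re := re_cpow_inv_two_pos hz1
  have him : 0 ≤ a.im * b.im := im_cpow_inv_two_mul_nonneg (by simp)
  have hab : ‖a‖ ≤ ‖a + b‖ := norm_le_norm_add_of_re_mul_conj_nonneg <| by
    rw [mul_re, conj_re, conj_im]
    nlinarith
  have hdiff : (b - a) * (a + b) = 1 := by
    rw [show (b - a) * (a + b) = b ^ 2 - a ^ 2 by ring, cpow_ofNat_inv_pow,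
      cpow_ofNat_inv_pow]
    ring
  have ha0 : a ≠ 0 := ne_zero_of_re_pos ha
  have hb0 : b ≠ 0 := ne_zero_of_re_pos hb
  rw [show a⁻¹ - b⁻¹ = a⁻¹ ^ 2 * b⁻¹ * (a * (b - a)) by field_simp]
  simp only [norm_mul, norm_pow, norm_inv]
  have hba : ‖a‖ * ‖b - a‖ ≤ 1 := by
    have h1 : ‖b - a‖ * ‖a + b‖ = 1 := by rw [← norm_mul, hdiff, norm_one]
    nlinarith [norm_nonneg (b - a)]
  have : 0 ≤ ‖a‖⁻¹ ^ 2 * ‖b‖⁻¹ := by positivity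
  calc ‖a‖⁻¹ ^ 2 * ‖b‖⁻¹ * (‖a‖ * ‖b - a‖) ≤ ‖a‖⁻¹ ^ 2 * ‖b‖⁻¹ * 1 := by gcongr
    _ = _ := mul_one _

lemma norm_cpow_neg_one_half_add_one_le {z : ℂ} (hz : 4 / 3 ≤ ‖z‖) :
    ‖(z + 1) ^ (-(1 : ℂ) / 2)‖ ≤ 2 * ‖z ^ (-(1 : ℂ) / 2)‖ := by
  refine le_of_pow_le_pow_left₀ two_ne_zero (by positivity) ?_
  have hz1 : ‖z‖ / 4 ≤ ‖z + 1‖ := by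
    have := norm_sub_norm_le z (-1)
    rw [sub_neg_eq_add, norm_neg, norm_one] at this
    linarith
  rw [mul_pow, ← norm_pow, ← norm_pow, cpow_neg_one_half_sq, cpow_neg_one_half_sq, norm_inv,
    norm_inv]
  calc ‖z + 1‖⁻¹ ≤ (‖z‖ / 4)⁻¹ := inv_anti₀ (by positivity) hz1
    _ = 2 ^ 2 * ‖z‖⁻¹ := by ring

lemma rpow_neg_three_halves_eq_norm_cpow_pow (z : ℂ) :
    ‖z‖ ^ (-(3 : ℝ) / 2) = ‖z ^ (-(1 : ℂ) / 2)‖ ^ 3 := by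
  rw [show -(1 : ℂ) / 2 = ((-(1 : ℝ) / 2 : ℝ) : ℂ) by push_cast; ring, norm_cpow_real,
    ← Real.rpow_mul_natCast (norm_nonneg z)]
  norm_num

end Complex

lemma DFun_eq_cpow (α : ℝ) {z : ℂ} (hz : z + 1 ≠ 0) :
    DFun α z =
      ((1 + (z + 1) ^ (-(1 : ℂ) / 2)) / (1 - (z + 1) ^ (-(1 : ℂ) / 2))) ^ (-(α : ℂ) / 2) := by
  have hb : (z + 1) ^ ((1 : ℂ) / 2) ≠ 0 := cpow_ne_zero_iff.2 (Or.inl hz)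
  rw [DFun, show -(1 : ℂ) / 2 = -(1 / 2) by ring, cpow_neg,
    ← div_div_div_cancel_right₀ hb, add_div, sub_div, div_self hb, one_div]

lemma norm_DFun_sub_expansion_le (α : ℝ) {z : ℂ} (hz : z ∈ slitPlane)
    (ht : ‖z ^ (-(1 : ℂ) / 2)‖ ≤ 1 / 4) (hαt : 3 * |α| * ‖z ^ (-(1 : ℂ) / 2)‖ ≤ 1) :
    ‖DFun α z - 1 + (α : ℂ) * z ^ (-(1 : ℂ) / 2) - ((α : ℂ) ^ 2 / 2) * z⁻¹‖
      ≤ (27 * |α| ^ 3 + α ^ 2 / 2 + 14 * |α|) * ‖z ^ (-(1 : ℂ) / 2)‖ ^ 3 := by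
  set a := z ^ (-(1 : ℂ) / 2)
  set w := (z + 1) ^ (-(1 : ℂ) / 2)
  set t := ‖a‖
  set c : ℂ := -(α : ℂ) / 2
  have ht0 : 0 ≤ t := norm_nonneg a
  have hα0 : 0 ≤ |α| := abs_nonneg α
  have hc : ‖c‖ = |α| / 2 := by simp [c, norm_neg, Complex.norm_real]
  have hz16 : 16 ≤ ‖z‖ := by
    have h := norm_pow a 2
    rw [cpow_neg_one_half_sq, norm_inv] at h
    have hinv : ‖z‖⁻¹ ≤ 16⁻¹ := by rw [h]; nlinarith
    exact (inv_le_inv₀ (norm_pos_iff.2 (slitPlane_ne_zero hz)) (by norm_num)).1 hinv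
  have hw : ‖w‖ ≤ 2 * t := norm_cpow_neg_one_half_add_one_le (by linarith)
  have hw0 : 0 ≤ ‖w‖ := norm_nonneg w
  have hratio := norm_one_add_div_one_sub_cpow_sub_le c (w := w) (by linarith)
    (by rw [hc]; nlinarith)
  have hroots : ‖a - w‖ ≤ t ^ 2 * ‖w‖ := norm_cpow_neg_one_half_sub_add_one_le hz
  have hsq : ‖w ^ 2 - a ^ 2‖ = t ^ 2 * ‖w‖ ^ 2 := by
    rw [cpow_neg_one_half_sq, cpow_neg_one_half_sq, ← norm_pow, ← norm_pow, ← norm_mul,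
      cpow_neg_one_half_sq, cpow_neg_one_half_sq, ← norm_neg]
    congr 1
    field_simp [slitPlane_ne_zero hz, slitPlane_ne_zero (add_one_mem_slitPlane hz)]
    ring
  rw [DFun_eq_cpow α (slitPlane_ne_zero (add_one_mem_slitPlane hz)), ← cpow_neg_one_half_sq z]
  calc _ = ‖(((1 + w) / (1 - w)) ^ c - (1 + 2 * c * w + 2 * c ^ 2 * w ^ 2))
        + α * (a - w) + (α ^ 2 / 2 : ℂ) * (w ^ 2 - a ^ 2)‖ := by congr 1; ring
    _ ≤ (27 * ‖c‖ ^ 3 + 3 * ‖c‖) * ‖w‖ ^ 3 + |α| * (t ^ 2 * ‖w‖)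
        + α ^ 2 / 2 * (t ^ 2 * ‖w‖ ^ 2) := by
      refine (norm_add_le _ _).trans
        (add_le_add ((norm_add_le _ _).trans (add_le_add hratio ?_)) ?_)
      · rw [norm_mul, Complex.norm_real, Real.norm_eq_abs]
        gcongr
      · rw [norm_mul, hsq]
        norm_cast
        rw [Real.norm_of_nonneg (by positivity)]
    _ ≤ (27 * (|α| / 2) ^ 3 + 3 * (|α| / 2)) * (2 * t) ^ 3 + |α| * (t ^ 2 * (2 * t))
        + α ^ 2 / 2 * (t ^ 2 * (2 * t) ^ 2) := by
      rw [hc]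
      gcongr
    _ ≤ _ := by
      have : α ^ 2 / 2 * (t ^ 2 * (2 * t) ^ 2) ≤ α ^ 2 / 2 * t ^ 3 := by
        have : 0 ≤ α ^ 2 / 2 * t ^ 3 := by positivity
        nlinarith
      nlinarith

theorem DFun_asymptotics_at_infinity_general (α : ℝ) :
    ∃ R > (0 : ℝ), ∃ C > (0 : ℝ), ∀ z : ℂ, ¬(z.im = 0 ∧ z.re ≤ 0) →
      R ≤ ‖z‖ →
      ‖DFun α z - 1 + (α : ℂ) * z ^ (-(1 : ℂ) / 2) - ((α : ℂ) ^ 2 / 2) * z⁻¹‖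
        ≤ C * (‖z‖) ^ (-(3 : ℝ) / 2) := by
  refine ⟨16 + 9 * α ^ 2, by positivity, 27 * |α| ^ 3 + α ^ 2 / 2 + 14 * |α| + 1, by positivity,
    fun z hz hR => ?_⟩
  have hslit : z ∈ slitPlane := mem_slitPlane_iff.2 (by
    by_contra h
    push Not at h
    exact hz ⟨h.2, h.1⟩)
  set t := ‖z ^ (-(1 : ℂ) / 2)‖
  have ht2 : t ^ 2 * (16 + 9 * α ^ 2) ≤ 1 := by
    rw [← norm_pow, cpow_neg_one_half_sq, norm_inv]
    exact inv_mul_le_one_of_le₀ hR (norm_nonneg z)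
  have ht0 : 0 ≤ t := norm_nonneg _
  have ht : t ≤ 1 / 4 := by nlinarith
  have hαt : 3 * |α| * t ≤ 1 := by
    have : (3 * |α| * t) ^ 2 ≤ 1 := by rw [mul_pow, mul_pow, sq_abs]; nlinarith
    nlinarith [abs_nonneg α]
  rw [rpow_neg_three_halves_eq_norm_cpow_pow]
  exact (norm_DFun_sub_expansion_le α hslit ht hαt).trans
    (mul_le_mul_of_nonneg_right (by linarith) (by positivity))

/-- As `z → ∞` off `(−∞, 0]`,
`D(z) = 1 − α z^{−1/2} + (α²/2) z^{−1} + O(|z|^{−3/2})`. -/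
theorem DFun_asymptotics_at_infinity (α : ℝ) (hα : -1 < α) :
    ∃ R > (0 : ℝ), ∃ C > (0 : ℝ), ∀ z : ℂ, ¬(z.im = 0 ∧ z.re ≤ 0) →
      R ≤ ‖z‖ →
      ‖DFun α z - 1 + (α : ℂ) * z ^ (-(1 : ℂ) / 2) - ((α : ℂ) ^ 2 / 2) * z⁻¹‖
        ≤ C * (‖z‖) ^ (-(3 : ℝ) / 2) :=
  DFun_asymptotics_at_infinity_general α
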